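/- arXiv:0711.3176 — 4 statements merged into one kernel-verified Lean document; each statement's English description precedes it below -/
import Mathlib

section
/- Let X_1, …, X_M be mutually independent finite-valued random variables and Y a random variable. Then ρ(U) = I(X_U; Y) is nondecreasing: if U ⊆ V ⊆ {1,…,M} then I(X_U; Y) ≤ I(X_V; Y), and ρ(∅) = 0. Consequently the polyhedron G(ρ) = { x ∈ ℝ^M : Σ_{i∈U} x_i ≥ ρ(U) for all U ⊆ E } is a contra-polymatroid. -/
variable {E : Type*} [DecidableEq E] [Fintype E]

/-- Abstract conditional mutual information `I T W = I(X_T; Y | X_W)` satisfies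
the chain rule for pairwise disjoint sets of indices of the independent `X_i`. -/
def ChainRule (I : Finset E → Finset E → ℝ) : Prop :=
  ∀ T S W : Finset E, Disjoint T S → Disjoint T W → Disjoint S W →
    I (T ∪ S) W = I T (S ∪ W) + I S W

/-- Independent-conditioning monotonicity: conditioning on more of the mutually
independent `X_i` cannot decrease the mutual information with `Y`. -/
def CondMono (I : Finset E → Finset E → ℝ) : Prop :=
  ∀ T W W' : Finset E, W ⊆ W' → Disjoint T W' → I T W ≤ I T W'

/-- Nonnegativity of conditional mutual information. -/
def CMINonneg (I : Finset E → Finset E → ℝ) : Prop :=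
  ∀ T W : Finset E, 0 ≤ I T W

/-- A set function is supermodular. -/
def Supermodular (g : Finset E → ℝ) : Prop :=
  ∀ U V : Finset E, g U + g V ≤ g (U ∪ V) + g (U ∩ V)

/-- A contra-polymatroid: the polyhedron `{x : x(U) ≥ g(U) ∀U}` associated with a
nondecreasing supermodular function `g` with `g(∅) = 0`. -/
def IsContraPolymatroid (𝒢 : Set (E → ℝ)) : Prop :=
  ∃ g : Finset E → ℝ, Supermodular g ∧ (∀ U V : Finset E, U ⊆ V → g U ≤ g V) ∧
    g ∅ = 0 ∧ 𝒢 = {x | ∀ U : Finset E, g U ≤ ∑ i ∈ U, x i}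

/-- `ρ(U) = I(X_U; Y)` is nondecreasing with `ρ(∅) = 0`, and its associated
polyhedron `G(ρ)` is a contra-polymatroid. -/
theorem mutual_information_contra_polymatroid
    (I : Finset E → Finset E → ℝ) (hchain : ChainRule I) (hmono : CondMono I)
    (hnonneg : CMINonneg I) :
    (∀ U V : Finset E, U ⊆ V → I U ∅ ≤ I V ∅) ∧ I ∅ ∅ = 0 ∧
    IsContraPolymatroid {x : E → ℝ | ∀ U : Finset E, I U ∅ ≤ ∑ i ∈ U, x i} := by

  have hzero : I ∅ ∅ = 0 := by
    have := hchain ∅ ∅ ∅ (disjoint_bot_left) (disjoint_bot_left) (disjoint_bot_left)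
    simp at this
    linarith
  have hmon : ∀ U V : Finset E, U ⊆ V → I U ∅ ≤ I V ∅ := by
    intro U V hUV
    have hd : Disjoint (V \ U) U := Finset.sdiff_disjoint
    have h := hchain (V \ U) U ∅ hd disjoint_bot_right disjoint_bot_right
    rw [Finset.sdiff_union_of_subset hUV] at h
    simp only [Finset.union_empty] at h
    have := hnonneg (V \ U) U
    linarith
  refine ⟨hmon, hzero, (I · ∅), ?_, hmon, hzero, rfl⟩
  intro U V
  have hd : Disjoint (U \ V) V := Finset.sdiff_disjoint
  have hd2 : Disjoint (U \ V) (U ∩ V) := hd.mono_right Finset.inter_subset_right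
  have h1 := hchain (U \ V) V ∅ hd disjoint_bot_right disjoint_bot_right
  have h2 := hchain (U \ V) (U ∩ V) ∅ hd2 disjoint_bot_right disjoint_bot_right
  rw [Finset.sdiff_union_self_eq_union] at h1
  rw [show (U \ V) ∪ (U ∩ V) = U by
    ext a; simp [Finset.mem_sdiff, Finset.mem_inter, Finset.mem_union]; tauto] at h2
  simp only [Finset.union_empty] at h1 h2
  have h3 : I (U \ V) (U ∩ V) ≤ I (U \ V) V :=
    hmono _ _ _ Finset.inter_subset_right hd
  linarith
end

section
/- Let E be a finite set. Call a subset U ⊆ E 'decodable' for a rate vector R if R(T) ≤ σ_U(T) for all T ⊆ U, where σ_U(T) := I(X_T; Y | X_{U∖T}) with the variables outside U treated as noise. If U and V are both decodable, then U ∪ V is decodable. Consequently, there exists a unique maximal decodable subset (the maximum decodable subset). -/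
variable {E : Type*} [DecidableEq E] [Fintype E]

/-- A subset `U` is decodable for the rate vector `r` if the rates of its members lie in
the MAC capacity polymatroid with the complement of `U` treated as noise. -/
def Decodable (I : Finset E → Finset E → ℝ) (r : E → ℝ) (U : Finset E) : Prop :=
  ∀ T ⊆ U, ∑ i ∈ T, r i ≤ I T (U \ T)

/-- The union of two decodable subsets is decodable; consequently there is a unique
maximal decodable subset (the maximum decodable subset). -/
theorem maximum_decodable_subset_exists
    (I : Finset E → Finset E → ℝ) (hchain : ChainRule I) (hmono : CondMono I)
    (hnonneg : CMINonneg I) (r : E → ℝ) (hr : ∀ i, 0 ≤ r i) :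
    (∀ U V : Finset E, Decodable I r U → Decodable I r V → Decodable I r (U ∪ V)) ∧
    (∃! S : Finset E, Decodable I r S ∧ ∀ U : Finset E, Decodable I r U → U ⊆ S) := by
  classical
  have hUnion : ∀ U V : Finset E, Decodable I r U → Decodable I r V →
      Decodable I r (U ∪ V) := by
    intro U V hU hV T hT
    set A := T ∩ U with hA
    set B := T \ U with hB
    set W := (U ∪ V) \ T with hW
    have hABdisj : Disjoint A B := by
      rw [Finset.disjoint_left]; intro a haA haB
      simp [hA, hB] at haA haB; exact haB.2 haA.2
    have hABT : A ∪ B = T := by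
      ext a; simp [hA, hB]; tauto
    have hAU : A ⊆ U := Finset.inter_subset_right
    have hBV : B ⊆ V := by
      intro a ha
      simp [hB] at ha
      rcases Finset.mem_union.1 (hT ha.1) with h | h
      · exact absurd h ha.2
      · exact h
    have hAW : Disjoint A W := by
      rw [Finset.disjoint_left]; intro a haA haW
      simp [hA, hW] at haA haW; exact haW.2 haA.1
    have hBW : Disjoint B W := by
      rw [Finset.disjoint_left]; intro a haB haW
      simp [hB, hW] at haB haW; exact haW.2 haB.1
    have hchain' : I T W = I B (A ∪ W) + I A W := by
      have := hchain B A W hABdisj.symm hBW hAW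
      rwa [Finset.union_comm B A, hABT] at this
    have hm1 : I A (U \ A) ≤ I A W := by
      refine hmono A (U \ A) W ?_ hAW
      intro a ha
      simp [hA, hW] at ha ⊢
      tauto
    have hm2 : I B (V \ B) ≤ I B (A ∪ W) := by
      refine hmono B (V \ B) (A ∪ W) ?_ ?_
      · intro a ha
        simp [hA, hB, hW] at ha ⊢
        tauto
      · rw [Finset.disjoint_left]; intro a haB haAW
        simp [hA, hB, hW] at haB haAW
        rcases haAW with h | h
        · exact haB.2 h.2
        · exact h.2 haB.1
    have hsum : ∑ i ∈ T, r i = (∑ i ∈ A, r i) + ∑ i ∈ B, r i := by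
      rw [← hABT, Finset.sum_union hABdisj]
    have h1 : ∑ i ∈ A, r i ≤ I A (U \ A) := hU A hAU
    have h2 : ∑ i ∈ B, r i ≤ I B (V \ B) := hV B hBV
    rw [hsum, hchain']
    linarith
  have hempty : Decodable I r (∅ : Finset E) := by
    intro T hT
    rw [Finset.subset_empty] at hT
    subst hT
    simpa using hnonneg ∅ ∅
  set S : Finset E := ((Finset.univ : Finset (Finset E)).filter (Decodable I r)).sup id
    with hSdef
  have hS : Decodable I r S := by
    refine Finset.sup_induction ?_ ?_ ?_
    · exact hempty
    · intro a ha b hb; exact hUnion a b ha hb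
    · intro b hb; exact (Finset.mem_filter.1 hb).2
  have hSmax : ∀ U : Finset E, Decodable I r U → U ⊆ S := by
    intro U hU
    exact Finset.le_sup (f := id) (Finset.mem_filter.2 ⟨Finset.mem_univ U, hU⟩)
  refine ⟨hUnion, S, ⟨hS, hSmax⟩, ?_⟩
  rintro S' ⟨hS', hS'max⟩
  exact Finset.Subset.antisymm (hSmax S' hS') (hS'max S hS)
end

section
/- Let γ(x) = (1/2)log₂(1+x). For the two-user Gaussian multiple access channel with powers P₁, P₂ > 0 and noise N > 0, the four regions D^{{1,2}}, D^{{1}}, D^{{2}}, D^{∅} defined by: D^{{1,2}} = {(R₁,R₂) : R₁ ≤ γ(P₁/N), R₂ ≤ γ(P₂/N), R₁+R₂ ≤ γ((P₁+P₂)/N)}; D^{{1}} = {R₁ ≤ γ(P₁/(P₂+N)), R₂ > γ(P₂/N)}; D^{{2}} = {R₂ ≤ γ(P₂/(P₁+N)), R₁ > γ(P₁/N)}; D^{∅} = {R₁ > γ(P₁/(P₂+N)), R₂ > γ(P₂/(P₁+N)), R₁+R₂ > γ((P₁+P₂)/N)} are pairwise disjoint and their union is ℝ₊². -/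
/-!
All four regions are cut out by the five numbers `C₁ = γ(P₁/N)`, `C₂ = γ(P₂/N)`,
`C₁' = γ(P₁/(P₂+N))`, `C₂' = γ(P₂/(P₁+N))` and `C = γ((P₁+P₂)/N)`. Successive decoding gives
`C₁' + C₂ = C = C₂' + C₁`, and monotonicity of `γ` gives `C ≤ C₁ + C₂`, equivalently
`C₁' ≤ C₁`. From these three relations alone, any two regions are separated by one of their
defining inequalities, and a case split on `R₁ ≤ C₁'`, `R₂ ≤ C₂'` and `R₁ + R₂ ≤ C` places every
rate pair in one of the regions.
-/

/-- `γ(x) = (1/2) log₂(1+x)`. -/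
noncomputable def gammaFn (x : ℝ) : ℝ := Real.logb 2 (1 + x) / 2

theorem gammaFn_le_gammaFn {x y : ℝ} (hx : 0 ≤ x) (hxy : x ≤ y) : gammaFn x ≤ gammaFn y := by
  unfold gammaFn
  gcongr
  norm_num

theorem gammaFn_div_add_gammaFn_div {a b N : ℝ} (ha : 0 ≤ a) (hb : 0 ≤ b) (hN : 0 < N) :
    gammaFn (a / (b + N)) + gammaFn (b / N) = gammaFn ((a + b) / N) := by
  have hbN : 0 < b + N := by linarith
  unfold gammaFn
  rw [← add_div, ← Real.logb_mul (by positivity) (by positivity)]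
  congr 2
  field_simp
  ring

theorem gammaFn_add_div_le {a b N : ℝ} (ha : 0 ≤ a) (hb : 0 ≤ b) (hN : 0 < N) :
    gammaFn ((a + b) / N) ≤ gammaFn (a / N) + gammaFn (b / N) := by
  rw [← gammaFn_div_add_gammaFn_div ha hb hN]
  gcongr
  exact gammaFn_le_gammaFn (by positivity) (div_le_div_of_nonneg_left ha hN (by linarith))

namespace TwoUserMAC

/- `regionBoth`, `regionFirst`, `regionSecond`, `regionNone` are the paper's `D^{1,2}`, `D^{1}`,
`D^{2}`, `D^∅`: the rate pairs whose maximal decodable set of users is the superscript. -/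

def regionBoth (C₁ C₂ C : ℝ) : Set (ℝ × ℝ) := {R | R.1 ≤ C₁ ∧ R.2 ≤ C₂ ∧ R.1 + R.2 ≤ C}

def regionFirst (C₁' C₂ : ℝ) : Set (ℝ × ℝ) := {R | R.1 ≤ C₁' ∧ C₂ < R.2}

def regionSecond (C₂' C₁ : ℝ) : Set (ℝ × ℝ) := {R | R.2 ≤ C₂' ∧ C₁ < R.1}

def regionNone (C₁' C₂' C : ℝ) : Set (ℝ × ℝ) := {R | C₁' < R.1 ∧ C₂' < R.2 ∧ C < R.1 + R.2}

variable {C₁ C₂ C₁' C₂' C : ℝ}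

theorem disjoint_regionBoth_regionFirst : Disjoint (regionBoth C₁ C₂ C) (regionFirst C₁' C₂) :=
  Set.disjoint_left.mpr fun _ ⟨_, h, _⟩ ⟨_, h'⟩ => (h.trans_lt h').false

theorem disjoint_regionBoth_regionSecond : Disjoint (regionBoth C₁ C₂ C) (regionSecond C₂' C₁) :=
  Set.disjoint_left.mpr fun _ ⟨h, _, _⟩ ⟨_, h'⟩ => (h.trans_lt h').false

theorem disjoint_regionBoth_regionNone : Disjoint (regionBoth C₁ C₂ C) (regionNone C₁' C₂' C) :=
  Set.disjoint_left.mpr fun _ ⟨_, _, h⟩ ⟨_, _, h'⟩ => (h.trans_lt h').false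

theorem disjoint_regionFirst_regionNone : Disjoint (regionFirst C₁' C₂) (regionNone C₁' C₂' C) :=
  Set.disjoint_left.mpr fun _ ⟨h, _⟩ ⟨h', _, _⟩ => (h.trans_lt h').false

theorem disjoint_regionSecond_regionNone : Disjoint (regionSecond C₂' C₁) (regionNone C₁' C₂' C) :=
  Set.disjoint_left.mpr fun _ ⟨h, _⟩ ⟨_, h', _⟩ => (h.trans_lt h').false

theorem disjoint_regionFirst_regionSecond (hC₁' : C₁' + C₂ = C) (hC : C ≤ C₁ + C₂) :
    Disjoint (regionFirst C₁' C₂) (regionSecond C₂' C₁) :=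
  Set.disjoint_left.mpr fun _ ⟨h, _⟩ ⟨_, h'⟩ => by linarith

theorem regionBoth_union_eq_univ (hC₁' : C₁' + C₂ = C) (hC₂' : C₂' + C₁ = C)
    (hC : C ≤ C₁ + C₂) :
    regionBoth C₁ C₂ C ∪ regionFirst C₁' C₂ ∪ regionSecond C₂' C₁ ∪ regionNone C₁' C₂' C =
      Set.univ := by
  refine Set.eq_univ_of_forall fun R => ?_
  simp only [regionBoth, regionFirst, regionSecond, regionNone, Set.mem_union, Set.mem_ofPred_eq]
  rcases le_or_gt R.1 C₁' with h₁ | h₁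
  · rcases le_or_gt R.2 C₂ with h₂ | h₂
    · exact .inl <| .inl <| .inl ⟨by linarith, h₂, by linarith⟩
    · exact .inl <| .inl <| .inr ⟨h₁, h₂⟩
  rcases le_or_gt R.2 C₂' with h₂ | h₂
  · rcases le_or_gt R.1 C₁ with h₁' | h₁'
    · exact .inl <| .inl <| .inl ⟨h₁', by linarith, by linarith⟩
    · exact .inl <| .inr ⟨h₂, h₁'⟩
  rcases le_or_gt (R.1 + R.2) C with hs | hs
  · exact .inl <| .inl <| .inl ⟨by linarith, by linarith, hs⟩
  · exact .inr ⟨h₁, h₂, hs⟩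

end TwoUserMAC

open TwoUserMAC in
/-- Decision regions for the maximum decodable subset of a two-user additive Gaussian
channel: the four regions are pairwise disjoint and cover the nonnegative quadrant. -/
theorem two_user_decision_regions_partition
    (P₁ P₂ N : ℝ) (hP₁ : 0 < P₁) (hP₂ : 0 < P₂) (hN : 0 < N) :
    let D12 : Set (ℝ × ℝ) := {R | R.1 ≤ gammaFn (P₁ / N) ∧ R.2 ≤ gammaFn (P₂ / N) ∧
      R.1 + R.2 ≤ gammaFn ((P₁ + P₂) / N)}
    let D1 : Set (ℝ × ℝ) := {R | R.1 ≤ gammaFn (P₁ / (P₂ + N)) ∧ gammaFn (P₂ / N) < R.2}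
    let D2 : Set (ℝ × ℝ) := {R | R.2 ≤ gammaFn (P₂ / (P₁ + N)) ∧ gammaFn (P₁ / N) < R.1}
    let D0 : Set (ℝ × ℝ) := {R | gammaFn (P₁ / (P₂ + N)) < R.1 ∧
      gammaFn (P₂ / (P₁ + N)) < R.2 ∧ gammaFn ((P₁ + P₂) / N) < R.1 + R.2}
    let Q : Set (ℝ × ℝ) := {R | 0 ≤ R.1 ∧ 0 ≤ R.2}
    (D12 ∩ D1 = ∅) ∧ (D12 ∩ D2 = ∅) ∧ (D12 ∩ D0 = ∅) ∧
    (D1 ∩ D2 = ∅) ∧ (D1 ∩ D0 = ∅) ∧ (D2 ∩ D0 = ∅) ∧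
    ((D12 ∪ D1 ∪ D2 ∪ D0) ∩ Q = Q) := by
  intro D12 D1 D2 D0 Q
  have hC₁' := gammaFn_div_add_gammaFn_div hP₁.le hP₂.le hN
  have hC₂' := gammaFn_div_add_gammaFn_div hP₂.le hP₁.le hN
  rw [add_comm P₂] at hC₂'
  have hC := gammaFn_add_div_le hP₁.le hP₂.le hN
  have hcover := regionBoth_union_eq_univ hC₁' hC₂' hC
  exact ⟨disjoint_regionBoth_regionFirst.inter_eq, disjoint_regionBoth_regionSecond.inter_eq,
    disjoint_regionBoth_regionNone.inter_eq, (disjoint_regionFirst_regionSecond hC₁' hC).inter_eq,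
    disjoint_regionFirst_regionNone.inter_eq, disjoint_regionSecond_regionNone.inter_eq,
    Set.inter_eq_right.mpr fun R _ => Set.eq_univ_iff_forall.mp hcover R⟩
end

section
/- Gaussian broadcast decomposition: given a finite set E of users with powers P_i > 0 and componentwise positive rates R_i > 0, there exist L ≥ 1, noise levels 0 < N₁ < N₂ < … < N_L, and a partition E = U₁ ∪ … ∪ U_L into disjoint nonempty sets such that for each i: (a) R(U_i) = γ( P(U_i) / (N_i + P(U₁ ∪ … ∪ U_{i−1})) ); (b) R(T) ≤ γ( P(T) / (N_i + P(U₁ ∪ … ∪ U_{i−1})) ) for all T ⊆ U_i; and (c) R(T) < γ( P(T) / (N_i + P(U₁ ∪ … ∪ U_i)) ) for all nonempty T ⊆ U_{i+1} ∪ … ∪ U_L. -/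
namespace GBD

set_option linter.unusedSectionVars false

variable {ι : Type*} [DecidableEq ι] [Fintype ι]

noncomputable def pS (P : ι → ℝ) (T : Finset ι) : ℝ := ∑ k ∈ T, P k
noncomputable def eF (R : ι → ℝ) (T : Finset ι) : ℝ := (2:ℝ) ^ (2 * ∑ k ∈ T, R k) - 1
noncomputable def mF (P R : ι → ℝ) (T : Finset ι) : ℝ := pS P T / eF R T

lemma pS_nonneg (P : ι → ℝ) (hP : ∀ i, 0 < P i) (T : Finset ι) : 0 ≤ pS P T :=
  Finset.sum_nonneg fun i _ => (hP i).le

lemma pS_pos (P : ι → ℝ) (hP : ∀ i, 0 < P i) {T : Finset ι} (hT : T.Nonempty) : 0 < pS P T :=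
  Finset.sum_pos (fun i _ => hP i) hT

lemma eF_nonneg (R : ι → ℝ) (hR : ∀ i, 0 < R i) (T : Finset ι) : 0 ≤ eF R T := by
  have h : (0:ℝ) ≤ 2 * ∑ k ∈ T, R k := by
    have := Finset.sum_nonneg (fun i (_ : i ∈ T) => (hR i).le); linarith
  have : (2:ℝ) ^ (0:ℝ) ≤ (2:ℝ) ^ (2 * ∑ k ∈ T, R k) :=
    Real.rpow_le_rpow_of_exponent_le one_le_two h
  simp only [Real.rpow_zero] at this
  simp only [eF]; linarith

lemma eF_pos (R : ι → ℝ) (hR : ∀ i, 0 < R i) {T : Finset ι} (hT : T.Nonempty) : 0 < eF R T := by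
  have h : (0:ℝ) < 2 * ∑ k ∈ T, R k := by
    have := Finset.sum_pos (fun i (_ : i ∈ T) => hR i) hT; linarith
  have : (2:ℝ) ^ (0:ℝ) < (2:ℝ) ^ (2 * ∑ k ∈ T, R k) :=
    Real.rpow_lt_rpow_of_exponent_lt one_lt_two h
  simp only [Real.rpow_zero] at this
  simp only [eF]; linarith

lemma eF_empty (R : ι → ℝ) : eF R (∅ : Finset ι) = 0 := by
  simp [eF]

lemma pS_empty (P : ι → ℝ) : pS P (∅ : Finset ι) = 0 := by simp [pS]

lemma eF_union_disjoint (R : ι → ℝ) {A B : Finset ι} (h : Disjoint A B) :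
    eF R (A ∪ B) = eF R A + eF R B + eF R A * eF R B := by
  have hsum : ∑ k ∈ A ∪ B, R k = ∑ k ∈ A, R k + ∑ k ∈ B, R k := Finset.sum_union h
  simp only [eF, hsum, mul_add]
  rw [Real.rpow_add two_pos]
  ring

lemma pS_union_disjoint (P : ι → ℝ) {A B : Finset ι} (h : Disjoint A B) :
    pS P (A ∪ B) = pS P A + pS P B := Finset.sum_union h

/-- supermodularity of `eF` -/
lemma eF_supermodular (R : ι → ℝ) (hR : ∀ i, 0 < R i) (A B : Finset ι) :
    eF R A + eF R B ≤ eF R (A ∪ B) + eF R (A ∩ B) := by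
  set a : ℝ := (2:ℝ) ^ (2 * ∑ k ∈ A ∪ B, R k) with ha
  set b : ℝ := (2:ℝ) ^ (2 * ∑ k ∈ A, R k) with hb
  set c : ℝ := (2:ℝ) ^ (2 * ∑ k ∈ B, R k) with hc
  set d : ℝ := (2:ℝ) ^ (2 * ∑ k ∈ A ∩ B, R k) with hd
  have hprod : a * d = b * c := by
    rw [ha, hb, hc, hd, ← Real.rpow_add two_pos, ← Real.rpow_add two_pos]
    congr 1
    have := Finset.sum_union_inter (s₁ := A) (s₂ := B) (f := R)
    ring_nf
    linarith
  have hRn : ∀ i ∈ A ∪ B, i ∉ A → 0 ≤ R i := fun i _ _ => (hR i).le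
  have hba : b ≤ a := by
    apply Real.rpow_le_rpow_of_exponent_le one_le_two
    have := Finset.sum_le_sum_of_subset_of_nonneg (Finset.subset_union_left (s₁ := A) (s₂ := B))
      (fun i _ _ => (hR i).le)
    linarith
  have hca : c ≤ a := by
    apply Real.rpow_le_rpow_of_exponent_le one_le_two
    have := Finset.sum_le_sum_of_subset_of_nonneg (Finset.subset_union_right (s₁ := A) (s₂ := B))
      (fun i _ _ => (hR i).le)
    linarith
  have hapos : 0 < a := Real.rpow_pos_of_pos two_pos _
  have key : b + c ≤ a + d := by
    nlinarith [mul_nonneg (sub_nonneg.2 hba) (sub_nonneg.2 hca)]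
  simp only [eF]
  linarith

/-- The recursive "good list" predicate. -/
def Good (P R : ι → ℝ) : List (Finset ι) → Prop
  | [] => True
  | (U :: ℓ) => U.Nonempty ∧
      (∀ T ⊆ U, mF P R U * eF R T ≤ pS P T) ∧
      (∀ T ⊆ (ℓ.foldr (· ∪ ·) ∅), T.Nonempty →
        (mF P R U + pS P U) * eF R T < pS P T) ∧
      Disjoint U (ℓ.foldr (· ∪ ·) ∅) ∧ Good P R ℓ

noncomputable def unionL (ℓ : List (Finset ι)) : Finset ι := ℓ.foldr (· ∪ ·) ∅

lemma mem_unionL {ℓ : List (Finset ι)} {x : ι} : x ∈ unionL ℓ ↔ ∃ W ∈ ℓ, x ∈ W := by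
  induction ℓ with
  | nil => simp [unionL]
  | cons U ℓ ih =>
    simp only [unionL, List.foldr] at ih ⊢
    simp only [Finset.mem_union, ih, List.mem_cons]
    constructor
    · rintro (h | ⟨W, hW, hx⟩)
      · exact ⟨U, Or.inl rfl, h⟩
      · exact ⟨W, Or.inr hW, hx⟩
    · rintro ⟨W, (rfl | hW), hx⟩
      · exact Or.inl hx
      · exact Or.inr ⟨W, hW, hx⟩

lemma subset_unionL {ℓ : List (Finset ι)} {W : Finset ι} (h : W ∈ ℓ) : W ⊆ unionL ℓ :=
  fun x hx => mem_unionL.2 ⟨W, h, hx⟩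


lemma good_nonempty {P R : ι → ℝ} {ℓ : List (Finset ι)} (h : Good P R ℓ)
    (i : ℕ) (hi : i < ℓ.length) : (ℓ[i]).Nonempty := by
  induction ℓ generalizing i with
  | nil => simp at hi
  | cons U ℓ ih =>
    obtain ⟨h1, h2, h3, h4, h5⟩ := h
    cases i with
    | zero => simpa using h1
    | succ n => simpa using ih h5 n (by simpa using hi)

lemma good_mac {P R : ι → ℝ} {ℓ : List (Finset ι)} (h : Good P R ℓ)
    (i : ℕ) (hi : i < ℓ.length) {T : Finset ι} (hT : T ⊆ ℓ[i]) :
    mF P R (ℓ[i]) * eF R T ≤ pS P T := by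
  induction ℓ generalizing i with
  | nil => simp at hi
  | cons U ℓ ih =>
    obtain ⟨h1, h2, h3, h4, h5⟩ := h
    cases i with
    | zero => exact h2 T hT
    | succ n => exact ih h5 n (by simpa using hi) hT

lemma good_strict {P R : ι → ℝ} {ℓ : List (Finset ι)} (h : Good P R ℓ)
    (i : ℕ) (hi : i < ℓ.length) {T : Finset ι} (hT : T ⊆ unionL (ℓ.drop (i+1)))
    (hne : T.Nonempty) :
    (mF P R (ℓ[i]) + pS P (ℓ[i])) * eF R T < pS P T := by
  induction ℓ generalizing i with
  | nil => simp at hi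
  | cons U ℓ ih =>
    obtain ⟨h1, h2, h3, h4, h5⟩ := h
    cases i with
    | zero => exact h3 T hT hne
    | succ n => exact ih h5 n (by simpa using hi) hT

lemma good_disjoint {P R : ι → ℝ} {ℓ : List (Finset ι)} (h : Good P R ℓ)
    (i j : ℕ) (hi : i < ℓ.length) (hj : j < ℓ.length) (hij : i < j) :
    Disjoint (ℓ[i]) (ℓ[j]) := by
  induction ℓ generalizing i j with
  | nil => simp at hi
  | cons U ℓ ih =>
    obtain ⟨h1, h2, h3, h4, h5⟩ := h
    cases i with
    | zero =>
      cases j with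
      | zero => omega
      | succ m =>
        have hm : m < ℓ.length := by simpa using hj
        have : (ℓ[m]) ⊆ unionL ℓ := subset_unionL (List.getElem_mem hm)
        exact Finset.disjoint_of_subset_right (by exact this) h4
    | succ n =>
      cases j with
      | zero => omega
      | succ m =>
        exact ih h5 n m (by simpa using hi) (by simpa using hj) (by omega)


lemma exists_good (P R : ι → ℝ) (hP : ∀ i, 0 < P i) (hR : ∀ i, 0 < R i) :
    ∀ S : Finset ι, ∃ ℓ : List (Finset ι), Good P R ℓ ∧ unionL ℓ = S := by
  intro S
  induction S using Finset.strongInduction with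
  | _ S ih =>
    classical
    rcases S.eq_empty_or_nonempty with rfl | hS
    · exact ⟨[], trivial, rfl⟩
    set 𝒞 : Finset (Finset ι) := S.powerset.filter (fun T => T.Nonempty) with h𝒞
    have memC : ∀ T : Finset ι, T ∈ 𝒞 ↔ T ⊆ S ∧ T.Nonempty := by
      intro T; simp [h𝒞, Finset.mem_filter, Finset.mem_powerset]
    have hC_ne : 𝒞.Nonempty := ⟨S, (memC S).2 ⟨le_refl S, hS⟩⟩
    obtain ⟨T₀, hT₀C, hT₀min⟩ := Finset.exists_min_image 𝒞 (mF P R) hC_ne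
    set M := mF P R T₀ with hM
    have hMpos : 0 < M := by
      have h1 := pS_pos P hP ((memC T₀).1 hT₀C).2
      have h2 := eF_pos R hR ((memC T₀).1 hT₀C).2
      exact div_pos h1 h2
    have hmac : ∀ T ∈ 𝒞, M * eF R T ≤ pS P T := by
      intro T hT
      have he := eF_pos R hR ((memC T).1 hT).2
      have h1 := hT₀min T hT
      calc M * eF R T ≤ mF P R T * eF R T := by nlinarith
        _ = pS P T := div_mul_cancel₀ _ (ne_of_gt he)
    set 𝒟 : Finset (Finset ι) := 𝒞.filter (fun T => M * eF R T = pS P T) with h𝒟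
    have memD : ∀ T, T ∈ 𝒟 ↔ T ∈ 𝒞 ∧ M * eF R T = pS P T := by
      intro T; simp [h𝒟, Finset.mem_filter]
    have hT₀D : T₀ ∈ 𝒟 := by
      refine (memD T₀).2 ⟨hT₀C, ?_⟩
      have he := eF_pos R hR ((memC T₀).1 hT₀C).2
      rw [hM, mF]
      field_simp
    obtain ⟨U, hUD, hUmax⟩ := Finset.exists_max_image 𝒟 Finset.card ⟨T₀, hT₀D⟩
    have hUC : U ∈ 𝒞 := ((memD U).1 hUD).1
    have hUS : U ⊆ S := ((memC U).1 hUC).1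
    have hUne : U.Nonempty := ((memC U).1 hUC).2
    have hUtight : M * eF R U = pS P U := ((memD U).1 hUD).2
    -- any tight set is contained in U
    have hDsub : ∀ A ∈ 𝒟, A ⊆ U := by
      intro A hAD
      obtain ⟨hAC, hAtight⟩ := (memD A).1 hAD
      have hAUC : A ∪ U ∈ 𝒞 := (memC _).2 ⟨Finset.union_subset ((memC A).1 hAC).1 hUS,
        hUne.mono Finset.subset_union_right⟩
      have hsuper : M * (eF R A + eF R U) ≤ M * (eF R (A ∪ U) + eF R (A ∩ U)) :=
        mul_le_mul_of_nonneg_left (eF_supermodular R hR A U) hMpos.le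
      have hPsum : pS P (A ∪ U) + pS P (A ∩ U) = pS P A + pS P U :=
        Finset.sum_union_inter
      have hmacAU := hmac _ hAUC
      have hmacAI : M * eF R (A ∩ U) ≤ pS P (A ∩ U) := by
        rcases (A ∩ U).eq_empty_or_nonempty with hI | hI
        · rw [hI, eF_empty, pS_empty]; simp
        · exact hmac _ ((memC _).2 ⟨(Finset.inter_subset_right).trans hUS, hI⟩)
      have htightAU : M * eF R (A ∪ U) = pS P (A ∪ U) := by
        apply le_antisymm hmacAU
        nlinarith
      have hAUD : A ∪ U ∈ 𝒟 := (memD _).2 ⟨hAUC, htightAU⟩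
      have hcard := hUmax _ hAUD
      have heq : U = A ∪ U :=
        Finset.eq_of_subset_of_card_le Finset.subset_union_right hcard
      intro x hx
      rw [heq]
      exact Finset.mem_union_left _ hx
    -- strict inequality for the remaining users
    have hstrict : ∀ T ⊆ S \ U, T.Nonempty → (M + pS P U) * eF R T < pS P T := by
      intro T hTsub hTne
      have hTS : T ⊆ S := hTsub.trans Finset.sdiff_subset
      have hdisj : Disjoint U T :=
        Finset.disjoint_of_subset_right hTsub Finset.disjoint_sdiff
      have hVC : U ∪ T ∈ 𝒞 := (memC _).2 ⟨Finset.union_subset hUS hTS,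
        hUne.mono Finset.subset_union_left⟩
      have hVlt : M * eF R (U ∪ T) < pS P (U ∪ T) := by
        rcases lt_or_eq_of_le (hmac _ hVC) with h | h
        · exact h
        · exfalso
          have hsub : U ∪ T ⊆ U := hDsub _ ((memD _).2 ⟨hVC, h⟩)
          obtain ⟨x, hx⟩ := hTne
          exact (Finset.disjoint_left.1 hdisj (hsub (Finset.mem_union_right _ hx))) hx
      rw [eF_union_disjoint R hdisj, pS_union_disjoint P hdisj] at hVlt
      have h5 : M * (eF R U * eF R T) = pS P U * eF R T := by
        rw [← mul_assoc, hUtight]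
      nlinarith
    have hMU : mF P R U = M := by
      rw [mF, ← hUtight]
      field_simp [ne_of_gt (eF_pos R hR hUne)]
    obtain ⟨ℓ', hg', hu'⟩ := ih (S \ U) (Finset.sdiff_ssubset hUS hUne)
    refine ⟨U :: ℓ', ⟨hUne, ?_, ?_, ?_, hg'⟩, ?_⟩
    · intro T hT
      rcases T.eq_empty_or_nonempty with rfl | hTne
      · rw [eF_empty, pS_empty]; simp
      · rw [hMU]
        exact hmac _ ((memC _).2 ⟨hT.trans hUS, hTne⟩)
    · intro T hT hTne
      rw [hMU]
      have hT' : T ⊆ S \ U := by rwa [show (ℓ'.foldr (· ∪ ·) ∅ : Finset ι) = S \ U from hu'] at hT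
      exact hstrict T hT' hTne
    · rw [show (ℓ'.foldr (· ∪ ·) ∅ : Finset ι) = S \ U from hu']
      exact Finset.disjoint_sdiff
    · show U ∪ unionL ℓ' = S
      rw [hu']
      exact Finset.union_sdiff_of_subset hUS


lemma le_gamma_iff {M p r : ℝ} (hM : 0 < M) (hp : 0 ≤ p) :
    r ≤ gammaFn (p / M) ↔ M * ((2:ℝ) ^ (2 * r) - 1) ≤ p := by
  have h1 : (0:ℝ) < 1 + p / M := by positivity
  have key : ((2:ℝ) ^ (r * 2) ≤ 1 + p / M) ↔ M * ((2:ℝ) ^ (2 * r) - 1) ≤ p := by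
    rw [show (1:ℝ) + p / M = (M + p) / M by field_simp, le_div_iff₀ hM,
      show r * 2 = 2 * r by ring]
    constructor <;> intro h <;> nlinarith
  rw [gammaFn, le_div_iff₀ (by norm_num : (0:ℝ) < 2),
    ← Real.rpow_le_rpow_left_iff (x := 2) one_lt_two,
    Real.rpow_logb two_pos (by norm_num) h1]
  exact key

lemma lt_gamma_iff {M p r : ℝ} (hM : 0 < M) (hp : 0 ≤ p) :
    r < gammaFn (p / M) ↔ M * ((2:ℝ) ^ (2 * r) - 1) < p := by
  have h1 : (0:ℝ) < 1 + p / M := by positivity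
  have key : ((2:ℝ) ^ (r * 2) < 1 + p / M) ↔ M * ((2:ℝ) ^ (2 * r) - 1) < p := by
    rw [show (1:ℝ) + p / M = (M + p) / M by field_simp, lt_div_iff₀ hM,
      show r * 2 = 2 * r by ring]
    constructor <;> intro h <;> nlinarith
  rw [gammaFn, lt_div_iff₀ (by norm_num : (0:ℝ) < 2),
    ← Real.rpow_lt_rpow_left_iff (x := 2) one_lt_two,
    Real.rpow_logb two_pos (by norm_num) h1]
  exact key

lemma eq_gamma {M p r : ℝ} (hM : 0 < M) (h : M * ((2:ℝ) ^ (2 * r) - 1) = p) :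
    r = gammaFn (p / M) := by
  have hpm : p / M = (2:ℝ) ^ (2 * r) - 1 := by
    rw [← h]; field_simp
  rw [gammaFn, hpm, show (1:ℝ) + ((2:ℝ) ^ (2 * r) - 1) = (2:ℝ) ^ (2 * r) by ring,
    Real.logb_rpow two_pos (by norm_num)]
  ring

end GBD

/-- Gaussian broadcast decomposition: for positive powers and positive rates there exist
noise levels `0 < N₁ < ⋯ < N_L` and a partition `E = U₁ ∪ ⋯ ∪ U_L` into nonempty sets
satisfying the tightness equality (a), the MAC inequalities (b) at each level, and the
strict inequalities (c) for the lower levels. -/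
theorem gaussian_broadcast_decomposition
    {ι : Type*} [DecidableEq ι] [Fintype ι] [Nonempty ι]
    (P R : ι → ℝ) (hP : ∀ i, 0 < P i) (hR : ∀ i, 0 < R i) :
    ∃ (L : ℕ) (_ : 1 ≤ L) (N : Fin L → ℝ) (U : Fin L → Finset ι),
      (∀ i, 0 < N i) ∧ StrictMono N ∧
      (∀ i, (U i).Nonempty) ∧
      (∀ i j, i ≠ j → Disjoint (U i) (U j)) ∧
      (Finset.univ.biUnion U = Finset.univ) ∧
      -- (a) tightness at each level
      (∀ i : Fin L, ∑ k ∈ U i, R k =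
        gammaFn ((∑ k ∈ U i, P k) /
          (N i + ∑ j ∈ Finset.Iio i, ∑ k ∈ U j, P k))) ∧
      -- (b) MAC inequalities at each level
      (∀ i : Fin L, ∀ T ⊆ U i, ∑ k ∈ T, R k ≤
        gammaFn ((∑ k ∈ T, P k) /
          (N i + ∑ j ∈ Finset.Iio i, ∑ k ∈ U j, P k))) ∧
      -- (c) strict inequalities for the users at lower levels
      (∀ i : Fin L, ∀ T ⊆ (Finset.Ioi i).biUnion U, T.Nonempty →
        ∑ k ∈ T, R k <
          gammaFn ((∑ k ∈ T, P k) /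
            (N i + ∑ j ∈ Finset.Iic i, ∑ k ∈ U j, P k))) := by
  classical
  obtain ⟨ℓ, hg, hu⟩ := GBD.exists_good P R hP hR Finset.univ
  have hlen : 0 < ℓ.length := by
    rcases ℓ with _ | ⟨W, ℓ⟩
    · exfalso
      obtain ⟨x⟩ := ‹Nonempty ι›
      have h0 : x ∈ GBD.unionL ([] : List (Finset ι)) := by rw [hu]; exact Finset.mem_univ x
      simp [GBD.unionL] at h0
    · simp
  refine ⟨ℓ.length, hlen, ?_⟩
  set L := ℓ.length with hLdef
  let U : Fin L → Finset ι := fun i => ℓ[(i : ℕ)]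
  let M : Fin L → ℝ := fun i => GBD.mF P R (U i)
  let N : Fin L → ℝ := fun i => M i - ∑ j ∈ Finset.Iio i, GBD.pS P (U j)
  have hUne : ∀ i, (U i).Nonempty := fun i => GBD.good_nonempty hg i i.isLt
  have hePos : ∀ i, 0 < GBD.eF R (U i) := fun i => GBD.eF_pos R hR (hUne i)
  have hpPos : ∀ i, 0 < GBD.pS P (U i) := fun i => GBD.pS_pos P hP (hUne i)
  have hMpos : ∀ i, 0 < M i := fun i => div_pos (hpPos i) (hePos i)
  have hMtight : ∀ i, M i * GBD.eF R (U i) = GBD.pS P (U i) := fun i =>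
    div_mul_cancel₀ _ (ne_of_gt (hePos i))
  -- membership in dropped tails
  have hmemdrop : ∀ i j : Fin L, i < j → U j ⊆ GBD.unionL (ℓ.drop ((i : ℕ) + 1)) := by
    intro i j hij
    apply GBD.subset_unionL
    have hm : (j : ℕ) - ((i : ℕ) + 1) < (ℓ.drop ((i : ℕ) + 1)).length := by
      rw [List.length_drop]
      have := j.isLt
      have := (Fin.lt_def).1 hij
      omega
    refine List.mem_iff_getElem.2 ⟨(j : ℕ) - ((i : ℕ) + 1), hm, ?_⟩
    rw [List.getElem_drop]
    have e : ((i : ℕ) + 1) + ((j : ℕ) - ((i : ℕ) + 1)) = (j : ℕ) := by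
      have := (Fin.lt_def).1 hij
      omega
    simp only [e]
    rfl
  have hIoiSub : ∀ i : Fin L, (Finset.Ioi i).biUnion U ⊆ GBD.unionL (ℓ.drop ((i : ℕ) + 1)) := by
    intro i x hx
    obtain ⟨j, hj, hxj⟩ := Finset.mem_biUnion.1 hx
    exact hmemdrop i j (Finset.mem_Ioi.1 hj) hxj
  -- strict inequality from Good
  have hstrict : ∀ i : Fin L, ∀ T ⊆ (Finset.Ioi i).biUnion U, T.Nonempty →
      (M i + GBD.pS P (U i)) * GBD.eF R T < GBD.pS P T := by
    intro i T hT hTne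
    exact GBD.good_strict hg i i.isLt (hT.trans (hIoiSub i)) hTne
  -- one-step noise growth
  have hstep : ∀ i j : Fin L, i < j → M i + GBD.pS P (U i) < M j := by
    intro i j hij
    have h1 := GBD.good_strict hg i i.isLt (hmemdrop i j hij) (hUne j)
    have h2 := hMtight j
    have he := hePos j
    nlinarith
  -- chained noise growth
  have hchain : ∀ n : ℕ, ∀ i j : Fin L, (j : ℕ) ≤ n → i < j →
      M i + ∑ k ∈ Finset.Ico i j, GBD.pS P (U k) < M j := by
    intro n
    induction n with
    | zero =>
      intro i j hj hij
      have := (Fin.lt_def).1 hij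
      omega
    | succ n ihn =>
      intro i j hj hij
      have hijn := (Fin.lt_def).1 hij
      have hj' : (j : ℕ) - 1 < L := by omega
      set j' : Fin L := ⟨(j : ℕ) - 1, hj'⟩ with hj'def
      by_cases hcase : i = j'
      · have hIco : Finset.Ico i j = {i} := by
          ext k
          simp only [Finset.mem_Ico, Finset.mem_singleton, Fin.lt_def, Fin.le_def, Fin.ext_iff]
          have : (i : ℕ) = (j : ℕ) - 1 := by rw [hcase]
          omega
        rw [hIco, Finset.sum_singleton]
        exact hstep i j hij
      · have hij2 : (i : ℕ) < (j : ℕ) - 1 := by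
          have : (i : ℕ) ≠ (j : ℕ) - 1 := fun h => hcase (Fin.ext h)
          omega
        have h1 := ihn i j' (by simp [hj'def]; omega) (by rw [Fin.lt_def]; simpa [hj'def] using hij2)
        have h2 := hstep j' j (by rw [Fin.lt_def]; simp [hj'def]; omega)
        have hIco : Finset.Ico i j = insert j' (Finset.Ico i j') := by
          ext k
          simp only [Finset.mem_Ico, Finset.mem_insert, Fin.lt_def, Fin.le_def, Fin.ext_iff,
            hj'def]
          omega
        have hnot : j' ∉ Finset.Ico i j' := by simp
        rw [hIco, Finset.sum_insert hnot]
        linarith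
  -- strict monotonicity of N
  have hNmono : StrictMono N := by
    intro i j hij
    have hsplit : Finset.Iio j = Finset.Iio i ∪ Finset.Ico i j := by
      ext k
      simp only [Finset.mem_Iio, Finset.mem_union, Finset.mem_Ico, Fin.lt_def, Fin.le_def]
      have := (Fin.lt_def).1 hij
      omega
    have hdisj2 : Disjoint (Finset.Iio i) (Finset.Ico i j) := by
      rw [Finset.disjoint_left]
      intro k hk hk2
      simp only [Finset.mem_Iio, Fin.lt_def] at hk
      simp only [Finset.mem_Ico, Fin.le_def, Fin.lt_def] at hk2
      omega
    have hsum : ∑ k ∈ Finset.Iio j, GBD.pS P (U k)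
        = ∑ k ∈ Finset.Iio i, GBD.pS P (U k) + ∑ k ∈ Finset.Ico i j, GBD.pS P (U k) := by
      rw [hsplit, Finset.sum_union hdisj2]
    have := hchain (j : ℕ) i j le_rfl hij
    show M i - _ < M j - _
    rw [hsum]
    linarith
  -- positivity of N
  have hi0 : (0 : ℕ) < L := hlen
  have hNpos : ∀ i, 0 < N i := by
    intro i
    have h0 : N ⟨0, hi0⟩ = M ⟨0, hi0⟩ := by
      show M _ - _ = M _
      rw [show Finset.Iio (⟨0, hi0⟩ : Fin L) = ∅ by
        ext k; simp [Fin.lt_def]]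
      simp
    rcases Nat.eq_zero_or_pos (i : ℕ) with h | h
    · have : i = ⟨0, hi0⟩ := Fin.ext h
      rw [this, h0]; exact hMpos _
    · have : (⟨0, hi0⟩ : Fin L) < i := by rw [Fin.lt_def]; simpa using h
      have := hNmono this
      rw [h0] at this
      exact lt_trans (hMpos _) this
  -- noise identities
  have hNM : ∀ i : Fin L, N i + ∑ j ∈ Finset.Iio i, ∑ k ∈ U j, P k = M i := by
    intro i
    show M i - ∑ j ∈ Finset.Iio i, GBD.pS P (U j) + _ = M i
    simp only [GBD.pS]
    ring
  have hNM' : ∀ i : Fin L, N i + ∑ j ∈ Finset.Iic i, ∑ k ∈ U j, P k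
      = M i + GBD.pS P (U i) := by
    intro i
    have hIic : Finset.Iic i = insert i (Finset.Iio i) := by
      ext k
      simp only [Finset.mem_Iic, Finset.mem_insert, Finset.mem_Iio, Fin.lt_def, Fin.le_def,
        Fin.ext_iff]
      omega
    rw [hIic, Finset.sum_insert (by simp)]
    show M i - ∑ j ∈ Finset.Iio i, GBD.pS P (U j) + _ = _
    simp only [GBD.pS]
    ring
  refine ⟨N, U, hNpos, hNmono, hUne, ?_, ?_, ?_, ?_, ?_⟩
  · -- pairwise disjoint
    intro i j hij
    rcases lt_trichotomy i j with h | h | h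
    · exact GBD.good_disjoint hg i j i.isLt j.isLt ((Fin.lt_def).1 h)
    · exact absurd h hij
    · exact (GBD.good_disjoint hg j i j.isLt i.isLt ((Fin.lt_def).1 h)).symm
  · -- covers univ
    ext x
    simp only [Finset.mem_biUnion, Finset.mem_univ, true_and, iff_true]
    have hx : x ∈ GBD.unionL ℓ := by rw [hu]; exact Finset.mem_univ x
    obtain ⟨W, hW, hxW⟩ := GBD.mem_unionL.1 hx
    obtain ⟨n, hn, rfl⟩ := List.mem_iff_getElem.1 hW
    exact ⟨⟨n, hn⟩, hxW⟩
  · -- (a)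
    intro i
    rw [hNM i]
    have h := hMtight i
    simp only [GBD.eF, GBD.pS] at h
    exact GBD.eq_gamma (hMpos i) h
  · -- (b)
    intro i T hT
    rw [hNM i]
    refine (GBD.le_gamma_iff (hMpos i) (GBD.pS_nonneg P hP T)).2 ?_
    have := GBD.good_mac hg i i.isLt hT
    simpa [GBD.eF, GBD.pS] using this
  · -- (c)
    intro i T hT hTne
    rw [hNM' i]
    have hMU : 0 < M i + GBD.pS P (U i) := by have := hMpos i; have := hpPos i; linarith
    refine (GBD.lt_gamma_iff hMU (GBD.pS_nonneg P hP T)).2 ?_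
    have := hstrict i T hT hTne
    simpa [GBD.eF, GBD.pS] using this
end
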